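/- For all natural numbers k ≥ 1 and n with n > 2k, the fermionic Stirling number of the first kind vanishes: s_f(n,k) = 0. -/
import Mathlib


open Finset

/-- `ε_n = (1 - (-1)^n)/2`, so `ε_n = 0` for even `n` and `ε_n = 1` for odd `n`. -/
def eps (n : ℕ) : ℤ := (1 - (-1 : ℤ) ^ n) / 2

/-- The fermionic Stirling numbers of the first kind, defined by the recurrence
`s_f(n+1,k) = (-1)^n s_f(n,k-1) + (-1)^{n+1} ε_n s_f(n,k)`, with `s_f(0,0) = 1`,
`s_f(n,0) = 0` for `n ≥ 1`, and `s_f(n,k) = 0` for `k > n`. -/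
def sf : ℕ → ℕ → ℤ
  | 0, 0 => 1
  | 0, _ + 1 => 0
  | _ + 1, 0 => 0
  | n + 1, k + 1 => (-1 : ℤ) ^ n * sf n k + (-1 : ℤ) ^ (n + 1) * eps n * sf n (k + 1)

lemma eps_even {n : ℕ} (h : Even n) : eps n = 0 := by
  simp [eps, h.neg_one_pow]

theorem sf_eq_zero_of_two_mul_lt (n k : ℕ) (hk : 1 ≤ k) (hn : 2 * k < n) : sf n k = 0 := by
  induction n generalizing k with
  | zero => omega
  | succ n ih =>
    cases k with
    | zero => omega
    | succ k =>
      rw [sf]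
      have h1 : sf n k = 0 := by
        cases k with
        | zero =>
          cases n with
          | zero => omega
          | succ m => rfl
        | succ k' => exact ih _ (by omega) (by omega)
      have h2 : eps n * sf n (k + 1) = 0 := by
        by_cases h : 2 * (k + 1) < n
        · rw [ih _ (by omega) h]; ring
        · have hne : n = 2 * (k + 1) := by omega
          rw [eps_even ⟨k + 1, by omega⟩]; ring
      rw [h1, mul_zero, zero_add, mul_assoc, h2, mul_zero]
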